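/- Let r be a real random variable with P(r ≥ -1) = 1, P(r > 0) > 0, P(r < 0) > 0, and E[(ln(1+r))²] < ∞. Then the following two conditions are equivalent: (i) there exists f ∈ (0,1) with E[ln(1 + f r)] > 0; (ii) lim_{f→0+} E[r/(1 + f r)] > 0. Moreover, if E|r| < ∞ and E[r] > 0, then both conditions hold. -/

import Mathlib

/-!
Write `g(f) = E[log (1 + f r)]` and `φ(f) = E[r / (1 + f r)]`. Integrating
`log b - log a ≤ b / a - 1` gives the tangent-line bound `g(f') - g(f) ≤ (f' - f) φ(f)`; at
`f' = 0` it reads `f φ(f) ≤ g(f)`, so a positive value of `φ` yields a positive value of `g`.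
Conversely, if `g(f₀) > 0`, then `g(f) < g(f₀)` for small `f`, because `g(f) → 0` as `f → 0+` by
dominated convergence, and the tangent-line bound forces `φ(f) > 0`. As `φ` is antitone, its
limit at `0+` is its supremum over `(0, 1)`, which is positive iff `φ` is positive somewhere.
If `E[r] > 0`, then `g(f) / f → E[r]`, again by dominated convergence, using
`|log (1 + f r)| ≤ 2 f |r|` for `f ≤ 1/2`.
-/

open MeasureTheory Real Filter Topology Set

lemma AntitoneOn.exists_lt_tendsto_nhdsGT_iff {β : Type*} [CompleteLinearOrder β]
    [TopologicalSpace β] [OrderTopology β] {u : ℝ → β} {a b : ℝ} (hab : a < b)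
    (hu : AntitoneOn u (Ioo a b)) (c : β) :
    (∃ l, c < l ∧ Tendsto u (𝓝[>] a) (𝓝 l)) ↔ ∃ f ∈ Ioo a b, c < u f := by
  have hlim := hu.tendsto_nhdsWithin_Ioo_right (nonempty_Ioo.2 hab) (OrderTop.bddAbove _)
  constructor
  · rintro ⟨l, hcl, hl⟩
    rw [tendsto_nhds_unique hl hlim] at hcl
    obtain ⟨_, ⟨f, hf, rfl⟩, hcf⟩ := lt_sSup_iff.1 hcl
    exact ⟨f, hf, hcf⟩
  · rintro ⟨f, hf, hcf⟩
    exact ⟨_, hcf.trans_le (le_sSup (mem_image_of_mem u hf)), hlim⟩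

lemma one_add_mul_pos {x f : ℝ} (hx : -1 ≤ x) (hf : 0 ≤ f) (hf1 : f < 1) : 0 < 1 + f * x := by
  nlinarith

lemma div_one_add_mul_le_div_one_add_mul {x a b : ℝ} (ha : 0 < 1 + a * x) (hb : 0 < 1 + b * x)
    (hab : a ≤ b) : x / (1 + b * x) ≤ x / (1 + a * x) := by
  rw [div_le_div_iff₀ hb ha]
  nlinarith [mul_le_mul_of_nonneg_right hab (sq_nonneg x)]

lemma abs_div_one_add_mul_le {x f : ℝ} (hx : -1 ≤ x) (hf : 0 < f) (hf1 : f < 1) :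
    |x / (1 + f * x)| ≤ 1 / f + 1 / (1 - f) := by
  have hden := one_add_mul_pos hx hf.le hf1
  have h1f : 0 < 1 - f := by linarith
  have hupper : x / (1 + f * x) ≤ 1 / f := by
    rw [div_le_div_iff₀ hden hf]; nlinarith
  have hlower : -x / (1 + f * x) ≤ 1 / (1 - f) := by
    rw [div_le_div_iff₀ hden h1f]; nlinarith
  rw [neg_div] at hlower
  rw [abs_le]
  constructor <;> linarith [one_div_pos.2 hf, one_div_pos.2 h1f]

namespace Real

lemma log_one_add_mul_sub_log_le {x a b : ℝ} (ha : 0 < 1 + a * x) (hb : 0 < 1 + b * x) :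
    log (1 + b * x) - log (1 + a * x) ≤ (b - a) * (x / (1 + a * x)) := by
  calc log (1 + b * x) - log (1 + a * x) = log ((1 + b * x) / (1 + a * x)) :=
        (log_div hb.ne' ha.ne').symm
    _ ≤ (1 + b * x) / (1 + a * x) - 1 := log_le_sub_one_of_pos (div_pos hb ha)
    _ = (b - a) * (x / (1 + a * x)) := by rw [div_sub_one ha.ne', mul_div_assoc']; ring_nf

lemma abs_log_one_add_mul_le {x f c : ℝ} (hx : -1 ≤ x) (hf : 0 ≤ f) (hfc : f ≤ c)
    (hc : c < 1) :
    |log (1 + f * x)| ≤ |log (1 + x)| - log (1 - c) := by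
  have h1c : 0 < 1 - c := by linarith
  have hlogc : log (1 - c) ≤ 0 := log_nonpos h1c.le (by linarith)
  rcases le_or_gt 0 x with hx0 | hx0
  · have h : log (1 + f * x) ≤ log (1 + x) := log_le_log (by nlinarith) (by nlinarith)
    rw [abs_of_nonneg (log_nonneg (by nlinarith))]
    linarith [le_abs_self (log (1 + x))]
  · have h : log (1 - c) ≤ log (1 + f * x) := log_le_log h1c (by nlinarith)
    rw [abs_of_nonpos (log_nonpos (by nlinarith) (by nlinarith))]
    linarith [abs_nonneg (log (1 + x))]

lemma abs_log_one_add_mul_le_two_mul {x f : ℝ} (hx : -1 ≤ x) (hf : 0 ≤ f)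
    (hf1 : f ≤ 1 / 2) :
    |log (1 + f * x)| ≤ 2 * f * |x| := by
  have hden : 0 < 1 + f * x := one_add_mul_pos hx hf (by linarith)
  have hupper := log_one_add_mul_sub_log_le (x := x) (a := 0) (b := f) (by simp) hden
  have hlower := log_one_add_mul_sub_log_le (x := x) (a := f) (b := 0) hden (by simp)
  simp only [zero_mul, add_zero, log_one, sub_zero, div_one, zero_sub, neg_mul,
    ← mul_div_assoc, neg_div, neg_le_neg_iff] at hupper hlower
  have hfx : -(2 * f * |x|) ≤ f * x / (1 + f * x) := by
    rw [le_div_iff₀ hden]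
    rcases le_or_gt 0 x with hx0 | hx0
    · rw [abs_of_nonneg hx0]; nlinarith [mul_nonneg hf hx0]
    · have hfx0 : f * x ≤ 0 := mul_nonpos_of_nonneg_of_nonpos hf hx0.le
      have hfx1 : 0 ≤ 1 + 2 * (f * x) := by nlinarith [mul_nonneg hf (by linarith : 0 ≤ x + 1)]
      rw [abs_of_neg hx0]
      nlinarith [mul_nonneg (neg_nonneg.2 hfx0) hfx1]
  rw [abs_le]
  constructor
  · linarith
  · nlinarith [mul_le_mul_of_nonneg_left (le_abs_self x) hf, mul_nonneg hf (abs_nonneg x)]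

lemma hasDerivAt_log_one_add_mul_zero (x : ℝ) :
    HasDerivAt (fun f : ℝ => log (1 + f * x)) x 0 := by
  have hinner : HasDerivAt (fun f : ℝ => 1 + f * x) x 0 := by
    simpa using ((hasDerivAt_id (0 : ℝ)).mul_const x).const_add 1
  simpa using hinner.log (by simp)

end Real

section GrowthRate

variable {Ω : Type*} [MeasurableSpace Ω] (P : Measure Ω) (r : Ω → ℝ)

/-- The growth rate `g_r(f)`. -/
noncomputable def growthRate (f : ℝ) : ℝ := ∫ ω, log (1 + f * r ω) ∂P

/-- The derivative of `growthRate P r` at `f ∈ (0, 1)`; its limit at `0+` is `g_r'(0+)`. -/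
noncomputable def growthSlope (f : ℝ) : ℝ := ∫ ω, r ω / (1 + f * r ω) ∂P

variable {P r}

@[simp]
lemma growthRate_zero : growthRate P r 0 = 0 := by
  simp [growthRate]

variable (hmeas : Measurable r)
include hmeas

lemma integrable_log_one_add [IsFiniteMeasure P]
    (hsq : Integrable (fun ω => (log (1 + r ω)) ^ 2) P) :
    Integrable (fun ω => log (1 + r ω)) P :=
  ((memLp_two_iff_integrable_sq (by fun_prop : Measurable _).aestronglyMeasurable).2
    hsq).integrable one_le_two

variable (h1 : ∀ᵐ ω ∂P, -1 ≤ r ω)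
include h1

lemma integrable_log_one_add_mul [IsFiniteMeasure P]
    (hsq : Integrable (fun ω => (log (1 + r ω)) ^ 2) P) {f : ℝ}
    (hf : 0 ≤ f) (hf1 : f < 1) : Integrable (fun ω => log (1 + f * r ω)) P := by
  refine ((integrable_log_one_add hmeas hsq).abs.sub (integrable_const (log (1 - f)))).mono'
    (by fun_prop : Measurable _).aestronglyMeasurable ?_
  filter_upwards [h1] with ω hω
  exact abs_log_one_add_mul_le hω hf le_rfl hf1

lemma integrable_div_one_add_mul [IsFiniteMeasure P] {f : ℝ} (hf : 0 < f) (hf1 : f < 1) :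
    Integrable (fun ω => r ω / (1 + f * r ω)) P := by
  refine (integrable_const (1 / f + 1 / (1 - f))).mono'
    (by fun_prop : Measurable _).aestronglyMeasurable ?_
  filter_upwards [h1] with ω hω
  exact abs_div_one_add_mul_le hω hf hf1

lemma growthRate_sub_le [IsFiniteMeasure P]
    (hsq : Integrable (fun ω => (log (1 + r ω)) ^ 2) P) {f f' : ℝ}
    (hf : f ∈ Ioo 0 1) (hf' : f' ∈ Ico 0 1) :
    growthRate P r f' - growthRate P r f ≤ (f' - f) * growthSlope P r f := by
  have hint' := integrable_log_one_add_mul hmeas h1 hsq hf'.1 hf'.2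
  have hint := integrable_log_one_add_mul hmeas h1 hsq hf.1.le hf.2
  rw [growthRate, growthRate, growthSlope, ← integral_sub hint' hint, ← integral_const_mul]
  refine integral_mono_ae (hint'.sub hint)
    ((integrable_div_one_add_mul hmeas h1 hf.1 hf.2).const_mul _) ?_
  filter_upwards [h1] with ω hω
  exact log_one_add_mul_sub_log_le (one_add_mul_pos hω hf.1.le hf.2)
    (one_add_mul_pos hω hf'.1 hf'.2)

lemma growthSlope_antitoneOn [IsFiniteMeasure P] : AntitoneOn (growthSlope P r) (Ioo 0 1) := by
  intro a ha b hb hab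
  refine integral_mono_ae (integrable_div_one_add_mul hmeas h1 hb.1 hb.2)
    (integrable_div_one_add_mul hmeas h1 ha.1 ha.2) ?_
  filter_upwards [h1] with ω hω
  exact div_one_add_mul_le_div_one_add_mul (one_add_mul_pos hω ha.1.le ha.2)
    (one_add_mul_pos hω hb.1.le hb.2) hab

lemma tendsto_growthRate_nhdsGT_zero [IsFiniteMeasure P]
    (hsq : Integrable (fun ω => (log (1 + r ω)) ^ 2) P) :
    Tendsto (growthRate P r) (𝓝[>] 0) (𝓝 0) := by
  unfold growthRate
  have h := tendsto_integral_filter_of_dominated_convergence (μ := P) (l := 𝓝[>] 0)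
    (F := fun f ω => log (1 + f * r ω)) (f := fun _ => 0)
    (fun ω => |log (1 + r ω)| - log (1 - 1 / 2))
    (.of_forall fun _ => (by fun_prop : Measurable _).aestronglyMeasurable) ?_
    ((integrable_log_one_add hmeas hsq).abs.sub (integrable_const _)) ?_
  · simpa using h
  · filter_upwards [Ioo_mem_nhdsGT (by norm_num : (0 : ℝ) < 1 / 2)] with f hf
    filter_upwards [h1] with ω hω
    exact abs_log_one_add_mul_le hω hf.1.le hf.2.le (by norm_num)
  · refine .of_forall fun ω => ?_
    have hcont : ContinuousAt (fun f : ℝ => log (1 + f * r ω)) 0 :=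
      ContinuousAt.log (by fun_prop) (by simp)
    simpa using hcont.tendsto.mono_left nhdsWithin_le_nhds

lemma tendsto_growthRate_div_nhdsGT_zero (hint : Integrable r P) :
    Tendsto (fun f => growthRate P r f / f) (𝓝[>] 0) (𝓝 (∫ ω, r ω ∂P)) := by
  simp only [growthRate, ← integral_div]
  refine tendsto_integral_filter_of_dominated_convergence (fun ω => 2 * |r ω|)
    (.of_forall fun _ => (by fun_prop : Measurable _).aestronglyMeasurable) ?_
    (hint.abs.const_mul 2) ?_
  · filter_upwards [Ioo_mem_nhdsGT (by norm_num : (0 : ℝ) < 1 / 2)] with f hf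
    filter_upwards [h1] with ω hω
    rw [norm_eq_abs, abs_div, abs_of_pos hf.1, div_le_iff₀ hf.1]
    linarith [abs_log_one_add_mul_le_two_mul hω hf.1.le hf.2.le]
  · refine .of_forall fun ω => ?_
    have hslope := hasDerivAt_iff_tendsto_slope.1 (hasDerivAt_log_one_add_mul_zero (r ω))
    refine (hslope.mono_left (nhdsWithin_mono _ fun f hf => ne_of_gt hf)).congr fun f => ?_
    simp [slope_def_field]

lemma exists_growthRate_pos_of_integral_pos (hint : Integrable r P)
    (hr : 0 < ∫ ω, r ω ∂P) : ∃ f ∈ Ioo 0 1, 0 < growthRate P r f := by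
  obtain ⟨f, hgf, hf⟩ := (((tendsto_growthRate_div_nhdsGT_zero hmeas h1 hint).eventually_const_lt
      hr).and (Ioo_mem_nhdsGT one_pos)).exists
  exact ⟨f, hf, (div_pos_iff_of_pos_right hf.1).1 hgf⟩

lemma exists_growthRate_pos_iff_exists_growthSlope_pos [IsFiniteMeasure P]
    (hsq : Integrable (fun ω => (log (1 + r ω)) ^ 2) P) :
    (∃ f ∈ Ioo 0 1, 0 < growthRate P r f) ↔ ∃ f ∈ Ioo 0 1, 0 < growthSlope P r f := by
  constructor
  · rintro ⟨f₀, hf₀, hg⟩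
    obtain ⟨f, hgf, hf⟩ := (((tendsto_growthRate_nhdsGT_zero hmeas h1 hsq).eventually_lt_const
      hg).and (Ioo_mem_nhdsGT hf₀.1)).exists
    have hf1 : f ∈ Ioo 0 1 := ⟨hf.1, hf.2.trans hf₀.2⟩
    have hchord := growthRate_sub_le hmeas h1 hsq hf1 (Ioo_subset_Ico_self hf₀)
    exact ⟨f, hf1, pos_of_mul_pos_right (by linarith) (sub_pos.2 hf.2).le⟩
  · rintro ⟨f, hf, hφ⟩
    have htangent := growthRate_sub_le hmeas h1 hsq hf (left_mem_Ico.2 one_pos)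
    rw [growthRate_zero] at htangent
    exact ⟨f, hf, by nlinarith [hf.1]⟩

end GrowthRate

theorem favorable_game_equivalence_general
    {Ω : Type*} [MeasurableSpace Ω] (P : Measure Ω) [IsProbabilityMeasure P]
    (r : Ω → ℝ) (hmeas : Measurable r)
    (h1 : ∀ᵐ ω ∂P, -1 ≤ r ω)
    (hsq : Integrable (fun ω => (Real.log (1 + r ω)) ^ 2) P) :
    ((∃ f ∈ Set.Ioo (0 : ℝ) 1, 0 < ∫ ω, Real.log (1 + f * r ω) ∂P)
      ↔ (∃ l : EReal, 0 < l ∧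
          Tendsto (fun f : ℝ => ((∫ ω, r ω / (1 + f * r ω) ∂P : ℝ) : EReal))
            (𝓝[>] (0 : ℝ)) (𝓝 l)))
    ∧ (Integrable r P → 0 < ∫ ω, r ω ∂P →
        (∃ f ∈ Set.Ioo (0 : ℝ) 1, 0 < ∫ ω, Real.log (1 + f * r ω) ∂P)
        ∧ (∃ l : EReal, 0 < l ∧
            Tendsto (fun f : ℝ => ((∫ ω, r ω / (1 + f * r ω) ∂P : ℝ) : EReal))
              (𝓝[>] (0 : ℝ)) (𝓝 l))) := by
  have hslope : AntitoneOn (fun f => (growthSlope P r f : EReal)) (Ioo 0 1) :=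
    fun a ha b hb hab => EReal.coe_le_coe_iff.2 (growthSlope_antitoneOn hmeas h1 ha hb hab)
  have hequiv : (∃ f ∈ Ioo (0 : ℝ) 1, 0 < growthRate P r f) ↔
      ∃ l : EReal, 0 < l ∧
        Tendsto (fun f => (growthSlope P r f : EReal)) (𝓝[>] 0) (𝓝 l) := by
    rw [exists_growthRate_pos_iff_exists_growthSlope_pos hmeas h1 hsq,
      hslope.exists_lt_tendsto_nhdsGT_iff one_pos]
    simp only [EReal.coe_pos]
  refine ⟨hequiv, fun hint hr => ?_⟩
  have hfav := exists_growthRate_pos_of_integral_pos hmeas h1 hint hr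
  exact ⟨hfav, hequiv.1 hfav⟩

/-- equivalence of the two "favorable game" conditions:
(i) `E[log(1+fr)] > 0` for some `f ∈ (0,1)`;
(ii) `lim_{f→0+} E[r/(1+fr)] > 0` (the limit, which exists in `(-∞, +∞]` by concavity,
is positive; formalized as convergence in `EReal` to a positive limit).
Moreover, if `E|r| < ∞` and `E[r] > 0`, then both conditions hold. -/
theorem favorable_game_equivalence
    {Ω : Type*} [MeasurableSpace Ω] (P : Measure Ω) [IsProbabilityMeasure P]
    (r : Ω → ℝ) (hmeas : Measurable r)
    (h1 : ∀ᵐ ω ∂P, -1 ≤ r ω)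
    (hpos : 0 < P {ω | 0 < r ω})
    (hneg : 0 < P {ω | r ω < 0})
    (hsq : Integrable (fun ω => (Real.log (1 + r ω)) ^ 2) P) :
    ((∃ f ∈ Set.Ioo (0 : ℝ) 1, 0 < ∫ ω, Real.log (1 + f * r ω) ∂P)
      ↔ (∃ l : EReal, 0 < l ∧
          Tendsto (fun f : ℝ => ((∫ ω, r ω / (1 + f * r ω) ∂P : ℝ) : EReal))
            (𝓝[>] (0 : ℝ)) (𝓝 l)))
    ∧ (Integrable r P → 0 < ∫ ω, r ω ∂P →
        (∃ f ∈ Set.Ioo (0 : ℝ) 1, 0 < ∫ ω, Real.log (1 + f * r ω) ∂P)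
        ∧ (∃ l : EReal, 0 < l ∧
            Tendsto (fun f : ℝ => ((∫ ω, r ω / (1 + f * r ω) ∂P : ℝ) : EReal))
              (𝓝[>] (0 : ℝ)) (𝓝 l))) :=
  favorable_game_equivalence_general P r hmeas h1 hsq
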